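/- arXiv:2206.04347 — 3 statements merged into one kernel-verified Lean document; each statement's English description precedes it below -/
import Mathlib

section
/- Let T' and T'' be finite connected preorders on disjoint sets X₁ and X₂. Then δ(T' ↘ T'') = T' ⊗ T'' + (T' ⊗ 1) ↘ δ(T'') + (1 ⊗ T') ↘ δ(T''), where T' ↘ T'' := Σ_{v ∈ X₂} T' ↘_v T'', and where (T' ⊗ 1) ↘ (A ⊗ B) := (T' ↘ A) ⊗ B and (1 ⊗ T') ↘ (A ⊗ B) := A ⊗ (T' ↘ B). -/
open scoped Classical

/-- A finite preorder (quasi-order, i.e. finite topological space) on a subset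
(`carrier`) of an ambient type `α`. -/
structure FinPre (α : Type*) where
  carrier : Finset α
  le : α → α → Prop
  mem_of_le : ∀ ⦃x y⦄, le x y → x ∈ carrier ∧ y ∈ carrier
  le_refl : ∀ x ∈ carrier, le x x
  le_trans : ∀ ⦃x y z⦄, le x y → le y z → le x z

namespace FinPre

variable {α : Type*} [DecidableEq α]

/-- The strict relation `x < y`, i.e. `x ≤ y` and not `y ≤ x`. -/
def lt (T : FinPre α) (x y : α) : Prop := T.le x y ∧ ¬ T.le y x

/-- The equivalence `x ~ y` iff `x ≤ y` and `y ≤ x`. -/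
def equiv (T : FinPre α) (x y : α) : Prop := T.le x y ∧ T.le y x

/-- The bag (equivalence class) of a vertex `v`. -/
noncomputable def bag (T : FinPre α) (v : α) : Finset α :=
  T.carrier.filter (fun x => T.equiv x v)

/-- `min(T)`: the set of minimal elements (`y ≤ x` implies `x ≤ y`). -/
noncomputable def minSet (T : FinPre α) : Finset α :=
  T.carrier.filter (fun x => ∀ y, T.le y x → T.le x y)

/-- Connectivity of a subset `S`, for the graph with edges between comparable pairs. -/
def ConnOn (T : FinPre α) (S : Set α) : Prop :=
  ∀ x ∈ S, ∀ y ∈ S,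
    Relation.ReflTransGen (fun a b => a ∈ S ∧ b ∈ S ∧ (T.le a b ∨ T.le b a)) x y

/-- A finite preorder is connected if it is nonempty and any two elements are linked by
a chain of comparable pairs. -/
def Connected (T : FinPre α) : Prop :=
  T.carrier.Nonempty ∧ T.ConnOn ↑T.carrier

/-- `I` is a connected component of `S` (for the comparability graph of `T`). -/
def IsCC (T : FinPre α) (S I : Set α) : Prop :=
  I.Nonempty ∧ I ⊆ S ∧ T.ConnOn I ∧
    ∀ x ∈ I, ∀ y ∈ S, (T.le x y ∨ T.le y x) → y ∈ I

/-- `Y_- = {x ∉ Y : ∃ y ∈ Y, x ≤ y}`. -/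
noncomputable def below (T : FinPre α) (Y : Finset α) : Finset α :=
  (T.carrier \ Y).filter (fun x => ∃ y ∈ Y, T.le x y)

/-- `Y ◎ T` : `Y` is an upper (open) set, the image of `Y_-` in the quotient poset `T̄`
is a single bag belonging to `min(T̄)` (i.e. `Y_-` is nonempty, contained in the bag of
some minimal `w`), and `Y` is a connected component of
`{x : y < x for all y ∈ Y_-}`. -/
def Circ (T : FinPre α) (Y : Finset α) : Prop :=
  (∀ x ∈ Y, ∀ z, T.le x z → z ∈ Y) ∧
  ∃ w ∈ T.below Y, w ∈ T.minSet ∧ (∀ x ∈ T.below Y, T.equiv x w) ∧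
    T.IsCC {x | x ∈ T.carrier ∧ ∀ y ∈ T.below Y, T.lt y x} ↑Y

/-- The induced (restricted) preorder on a subset `S`. -/
def restrict (T : FinPre α) (S : Finset α) : FinPre α where
  carrier := T.carrier ∩ S
  le x y := T.le x y ∧ x ∈ S ∧ y ∈ S
  mem_of_le := by
    intro x y h
    rcases T.mem_of_le h.1 with ⟨hx, hy⟩
    exact ⟨Finset.mem_inter.2 ⟨hx, h.2.1⟩, Finset.mem_inter.2 ⟨hy, h.2.2⟩⟩
  le_refl := by
    intro x hx
    rcases Finset.mem_inter.1 hx with ⟨h1, h2⟩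
    exact ⟨T.le_refl x h1, h2, h2⟩
  le_trans := by
    rintro x y z ⟨h1, hx, hy⟩ ⟨h2, _, hz⟩
    exact ⟨T.le_trans h1 h2, hx, hz⟩

/-- The grafting `T' ↘_v T''` of `T'` above the vertex `v` of `T''` (auxiliary version,
with the disjointness hypotheses as arguments). -/
def graftAux (T' T'' : FinPre α) (v : α) (hd : Disjoint T'.carrier T''.carrier)
    (hv : v ∈ T''.carrier) : FinPre α where
  carrier := T'.carrier ∪ T''.carrier
  le x y := T'.le x y ∨ T''.le x y ∨ (T''.le x v ∧ y ∈ T'.carrier)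
  mem_of_le := by
    rintro x y (h | h | ⟨h1, h2⟩)
    · rcases T'.mem_of_le h with ⟨hx, hy⟩
      exact ⟨Finset.mem_union_left _ hx, Finset.mem_union_left _ hy⟩
    · rcases T''.mem_of_le h with ⟨hx, hy⟩
      exact ⟨Finset.mem_union_right _ hx, Finset.mem_union_right _ hy⟩
    · exact ⟨Finset.mem_union_right _ (T''.mem_of_le h1).1, Finset.mem_union_left _ h2⟩
  le_refl := by
    intro x hx
    rcases Finset.mem_union.1 hx with h | h
    · exact Or.inl (T'.le_refl x h)
    · exact Or.inr (Or.inl (T''.le_refl x h))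
  le_trans := by
    rintro x y z (h1 | h1 | ⟨h1, h1'⟩) (h2 | h2 | ⟨h2, h2'⟩)
    · exact Or.inl (T'.le_trans h1 h2)
    · exact absurd (T''.mem_of_le h2).1 (Finset.disjoint_left.1 hd (T'.mem_of_le h1).2)
    · exact absurd (T''.mem_of_le h2).1 (Finset.disjoint_left.1 hd (T'.mem_of_le h1).2)
    · exact absurd (T'.mem_of_le h2).1 (Finset.disjoint_right.1 hd (T''.mem_of_le h1).2)
    · exact Or.inr (Or.inl (T''.le_trans h1 h2))
    · exact Or.inr (Or.inr ⟨T''.le_trans h1 h2, h2'⟩)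
    · exact Or.inr (Or.inr ⟨h1, (T'.mem_of_le h2).2⟩)
    · exact absurd (T''.mem_of_le h2).1 (Finset.disjoint_left.1 hd h1')
    · exact absurd (T''.mem_of_le h2).1 (Finset.disjoint_left.1 hd h1')

/-- The grafting `T' ↘_v T''` of `T'` above the vertex `v` of `T''`: the preorder on
`X₁ ⊔ X₂` restricting to `T'` on `X₁` and to `T''` on `X₂`, with `q ≤ p` for `q ∈ X₂`,
`p ∈ X₁` iff `q ≤_{T''} v`.  (Junk value when the carriers are not disjoint or
`v ∉ T''`.) -/
noncomputable def graft (T' T'' : FinPre α) (v : α) : FinPre α :=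
  if h : Disjoint T'.carrier T''.carrier ∧ v ∈ T''.carrier then
    T'.graftAux T'' v h.1 h.2 else T'

/-- The set of subsets `Y` of the carrier with `Y ◎ T`. -/
noncomputable def circSet (T : FinPre α) : Finset (Finset α) :=
  T.carrier.powerset.filter (fun Y => T.Circ Y)

/-- Isomorphisms from `A` to `B` (bijections order-preserving in both directions),
encoded as maps `α → α` that are the identity outside of the carrier of `A`. -/
def Isos (A B : FinPre α) : Set (α → α) :=
  {f | Set.BijOn f ↑A.carrier ↑B.carrier ∧
    (∀ x ∈ A.carrier, ∀ y ∈ A.carrier, (A.le x y ↔ B.le (f x) (f y))) ∧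
    ∀ x, x ∉ A.carrier → f x = x}

/-- `⟨A, B⟩`: the number of isomorphisms from `A` to `B`. -/
noncomputable def pairing (A B : FinPre α) : ℕ := Nat.card ↥(Isos A B)

/-- The NAP coproduct `δ(T) = (1/|min(T)|) Σ_{Y ◎ T} T|_Y ⊗ T|_{X \ Y}`, with values
in the rational vector space spanned by pairs of finite preorders. -/
noncomputable def delta (T : FinPre α) : (FinPre α × FinPre α) →₀ ℚ :=
  ((T.minSet.card : ℚ))⁻¹ • ∑ Y ∈ T.circSet,
    Finsupp.single (T.restrict Y, T.restrict (T.carrier \ Y)) (1 : ℚ)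

end FinPre

/-!
Grafting `T'` above `v` leaves `T''` unchanged, puts all of `X₁` strictly above every
`x ≤ v`, and does not change the minimal elements. Hence the sets `Z ◎ (T' ↘_v T'')` are
exactly: `Y ∪ X₁` for `v ∈ Y ◎ T''` (a connected component through `v` absorbs the
connected `X₁`, and conversely contracting `X₁` to `v` gives back `Y`); `Y ◎ T''` with
`v ∉ Y` (nothing of `X₁` is comparable to it); and `X₁` itself when `v` is minimal in `T''`.
Their cuts are `(T' ↘_v T''|_Y) ⊗ T''|_{X₂∖Y}`, `T''|_Y ⊗ (T' ↘_v T''|_{X₂∖Y})` and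
`T' ⊗ T''`. Summing over `v ∈ X₂`, each `Y ◎ T''` yields both sums of the right-hand side,
and `T' ⊗ T''` appears `|min(T'')|` times, which cancels the normalisation.
-/

theorem Relation.ReflTransGen.exists_crossing {α : Type*} {r : α → α → Prop} {p : α → Prop}
    {a b : α} (h : Relation.ReflTransGen r a b) (ha : p a) (hb : ¬ p b) :
    ∃ x y, r x y ∧ p x ∧ ¬ p y := by
  induction h with
  | refl => exact absurd ha hb
  | @tail c d _ hcd ih =>
    by_cases hc : p c
    · exact ⟨c, d, hcd, hc, hb⟩
    · exact ih hc

namespace FinPre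

section Preorder

variable {α : Type*}

protected theorem ext {A B : FinPre α} (hc : A.carrier = B.carrier) (hle : A.le = B.le) :
    A = B := by
  cases A; cases B; cases hc; cases hle; rfl

theorem mem_minSet {T : FinPre α} {x : α} :
    x ∈ T.minSet ↔ x ∈ T.carrier ∧ ∀ y, T.le y x → T.le x y := Finset.mem_filter

theorem minSet_subset (T : FinPre α) : T.minSet ⊆ T.carrier := Finset.filter_subset _ _

theorem mem_minSet_of_equiv {T : FinPre α} {x w : α} (hxw : T.equiv x w)
    (hw : w ∈ T.minSet) : x ∈ T.minSet :=
  mem_minSet.2 ⟨(T.mem_of_le hxw.1).1, fun y hyx =>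
    T.le_trans hxw.1 ((mem_minSet.1 hw).2 y (T.le_trans hyx hxw.1))⟩

theorem minSet_nonempty {T : FinPre α} (h : T.carrier.Nonempty) : T.minSet.Nonempty := by
  -- an element with the fewest elements below it is minimal
  obtain ⟨x, hx, hfew⟩ :=
    T.carrier.exists_min_image (fun x => (T.carrier.filter (T.le · x)).card) h
  refine ⟨x, mem_minSet.2 ⟨hx, fun y hyx => by_contra fun hxy => ?_⟩⟩
  have hsub : T.carrier.filter (T.le · y) ⊂ T.carrier.filter (T.le · x) :=
    Finset.ssubset_iff_of_subset (Finset.monotone_filter_right _ fun _ _ h => T.le_trans h hyx)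
      |>.2 ⟨x, Finset.mem_filter.2 ⟨hx, T.le_refl x hx⟩, fun h => hxy (Finset.mem_filter.1 h).2⟩
  exact (hfew y (T.mem_of_le hyx).1).not_gt (Finset.card_lt_card hsub)

theorem ConnOn.map {T U : FinPre α} {S S' : Set α} (hS : T.ConnOn S) (f : α → α)
    (hf : Set.MapsTo f S S') (hsurj : S' ⊆ f '' S)
    (hedge : ∀ a ∈ S, ∀ b ∈ S, T.le a b → f a = f b ∨ U.le (f a) (f b) ∨ U.le (f b) (f a)) :
    U.ConnOn S' := by
  have step : ∀ a ∈ S, ∀ b ∈ S, (f a = f b ∨ U.le (f a) (f b) ∨ U.le (f b) (f a)) →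
      Relation.ReflTransGen (fun c d => c ∈ S' ∧ d ∈ S' ∧ (U.le c d ∨ U.le d c))
        (f a) (f b) := by
    rintro a ha b hb (heq | hcomp)
    · rw [heq]
    · exact .single ⟨hf ha, hf hb, hcomp⟩
  rintro _ hx' _ hy'
  obtain ⟨x, hx, rfl⟩ := hsurj hx'
  obtain ⟨y, hy, rfl⟩ := hsurj hy'
  refine Relation.ReflTransGen.lift' f ?_ x y (hS x hx y hy)
  rintro a b ⟨ha, hb, hab | hba⟩
  · exact step a ha b hb (hedge a ha b hb hab)
  · exact step a ha b hb ((hedge b hb a ha hba).imp Eq.symm Or.symm)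

theorem ConnOn.mono_le {T U : FinPre α} {S : Set α} (hS : T.ConnOn S)
    (h : ∀ a ∈ S, ∀ b ∈ S, T.le a b → U.le a b) : U.ConnOn S :=
  hS.map id (Set.mapsTo_id S) (by simp) fun a ha b hb hab => Or.inr (Or.inl (h a ha b hb hab))

theorem ConnOn.union {T : FinPre α} {A B : Set α} (hA : T.ConnOn A) (hB : T.ConnOn B)
    {a b : α} (ha : a ∈ A) (hb : b ∈ B) (hab : T.le a b) : T.ConnOn (A ∪ B) := by
  set R := fun c d => c ∈ A ∪ B ∧ d ∈ A ∪ B ∧ (T.le c d ∨ T.le d c)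
  have lift : ∀ {C : Set α}, C ⊆ A ∪ B → T.ConnOn C →
      ∀ x ∈ C, ∀ y ∈ C, Relation.ReflTransGen R x y := fun hC hconn x hx y hy =>
    Relation.ReflTransGen.mono (fun c d ⟨hc, hd, hcd⟩ => ⟨hC hc, hC hd, hcd⟩) x y
      (hconn x hx y hy)
  have hab' : R a b := ⟨Or.inl ha, Or.inr hb, Or.inl hab⟩
  have hba' : R b a := ⟨Or.inr hb, Or.inl ha, Or.inr hab⟩
  rintro x (hx | hx) y (hy | hy)
  · exact lift Set.subset_union_left hA x hx y hy
  · exact (lift Set.subset_union_left hA x hx a ha).trans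
      (.head hab' (lift Set.subset_union_right hB b hb y hy))
  · exact (lift Set.subset_union_right hB x hx b hb).trans
      (.head hba' (lift Set.subset_union_left hA a ha y hy))
  · exact lift Set.subset_union_right hB x hx y hy

theorem IsCC.subset_of_connOn {T : FinPre α} {S I A : Set α} (hI : T.IsCC S I)
    (hA : T.ConnOn A) (hAS : A ⊆ S) {x : α} (hxA : x ∈ A) (hxI : x ∈ I) : A ⊆ I := by
  intro y hy
  have hpath := hA x hxA y hy
  clear hy
  induction hpath with
  | refl => exact hxI
  | tail _ hcd ih => exact hI.2.2.2 _ ih _ (hAS hcd.2.1) hcd.2.2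

def IsUpper (T : FinPre α) (Y : Finset α) : Prop := ∀ x ∈ Y, ∀ z, T.le x z → z ∈ Y

/-- `B` is nonempty and its image in `T̄` is a single bag of `min(T̄)`. -/
def MapsToMinBag (T : FinPre α) (B : Finset α) : Prop :=
  ∃ w ∈ B, w ∈ T.minSet ∧ ∀ x ∈ B, T.equiv x w

def strictUpper (T : FinPre α) (B : Finset α) : Set α :=
  {x | x ∈ T.carrier ∧ ∀ y ∈ B, T.lt y x}

end Preorder

variable {α : Type*} [DecidableEq α]

theorem circ_iff {T : FinPre α} {Y : Finset α} :
    T.Circ Y ↔ T.IsUpper Y ∧ T.MapsToMinBag (T.below Y) ∧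
      T.IsCC (T.strictUpper (T.below Y)) Y :=
  ⟨fun ⟨hup, w, hw, hmin, hequiv, hcc⟩ => ⟨hup, ⟨w, hw, hmin, hequiv⟩, hcc⟩,
    fun ⟨hup, ⟨w, hw, hmin, hequiv⟩, hcc⟩ => ⟨hup, w, hw, hmin, hequiv, hcc⟩⟩

theorem Circ.nonempty {T : FinPre α} {Y : Finset α} (h : T.Circ Y) : Y.Nonempty :=
  Finset.coe_nonempty.1 (circ_iff.1 h).2.2.1

theorem mem_circSet {T : FinPre α} {Y : Finset α} :
    Y ∈ T.circSet ↔ Y ⊆ T.carrier ∧ T.Circ Y := by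
  rw [circSet, Finset.mem_filter, Finset.mem_powerset]

theorem mem_below {T : FinPre α} {Y : Finset α} {x : α} :
    x ∈ T.below Y ↔ (x ∈ T.carrier ∧ x ∉ Y) ∧ ∃ y ∈ Y, T.le x y := by
  rw [below, Finset.mem_filter, Finset.mem_sdiff]

theorem below_subset (T : FinPre α) (Y : Finset α) : T.below Y ⊆ T.carrier :=
  fun _ hx => (mem_below.1 hx).1.1

theorem restrict_congr {T : FinPre α} {S S' : Finset α} (h : T.carrier ∩ S = T.carrier ∩ S') :
    T.restrict S = T.restrict S' := by
  have hmem : ∀ z ∈ T.carrier, z ∈ S ↔ z ∈ S' := fun z hz => by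
    simpa [hz] using Finset.ext_iff.1 h z
  refine FinPre.ext h (funext₂ fun x y => propext ⟨?_, ?_⟩)
  · rintro ⟨hxy, hx, hy⟩
    exact ⟨hxy, (hmem x (T.mem_of_le hxy).1).1 hx, (hmem y (T.mem_of_le hxy).2).1 hy⟩
  · rintro ⟨hxy, hx, hy⟩
    exact ⟨hxy, (hmem x (T.mem_of_le hxy).1).2 hx, (hmem y (T.mem_of_le hxy).2).2 hy⟩

theorem restrict_carrier (T : FinPre α) : T.restrict T.carrier = T :=
  FinPre.ext (Finset.inter_self _)
    (funext₂ fun _ _ => propext ⟨fun h => h.1, fun h => ⟨h, T.mem_of_le h⟩⟩)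

theorem sum_ite_mem_eq_restrict {M : Type*} [AddCommMonoid M] (T : FinPre α) (Y : Finset α)
    (f g : α → M) :
    ∑ v ∈ T.carrier, (if v ∈ Y then f v else g v) =
      ∑ v ∈ (T.restrict Y).carrier, f v + ∑ v ∈ (T.restrict (T.carrier \ Y)).carrier, g v := by
  rw [Finset.sum_ite, Finset.filter_mem_eq_inter, Finset.filter_notMem_eq_sdiff]
  show _ = _ + ∑ v ∈ T.carrier ∩ (T.carrier \ Y), g v
  rw [Finset.inter_eq_right.2 Finset.sdiff_subset]
  rfl

def graftSet (T' : FinPre α) (v : α) (Y : Finset α) : Finset α :=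
  if v ∈ Y then Y ∪ T'.carrier else Y

theorem graftSet_inter {T' T'' : FinPre α} (hd : Disjoint T'.carrier T''.carrier) (v : α)
    {Y : Finset α} (hY : Y ⊆ T''.carrier) : graftSet T' v Y ∩ T''.carrier = Y := by
  by_cases hvY : v ∈ Y
  · rw [graftSet, if_pos hvY, Finset.union_inter_distrib_right, Finset.inter_eq_left.2 hY,
      Finset.disjoint_iff_inter_eq_empty.1 hd, Finset.union_empty]
  · rw [graftSet, if_neg hvY, Finset.inter_eq_left.2 hY]

section Graft

variable {T' T'' : FinPre α} {v : α} (hd : Disjoint T'.carrier T''.carrier)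
  (hv : v ∈ T''.carrier)

local notation "G" => graftAux T' T'' v hd hv

theorem graft_eq_graftAux : graft T' T'' v = G := dif_pos ⟨hd, hv⟩

theorem mem_graftAux_carrier {x : α} : x ∈ (G).carrier ↔ x ∈ T'.carrier ∨ x ∈ T''.carrier :=
  Finset.mem_union

theorem graftAux_le_iff {x y : α} :
    (G).le x y ↔ T'.le x y ∨ T''.le x y ∨ (T''.le x v ∧ y ∈ T'.carrier) := Iff.rfl

theorem graftAux_le_iff_right {x y : α} (hy : y ∈ T''.carrier) :
    (G).le x y ↔ T''.le x y := by
  have := T'.mem_of_le (x := x) (y := y)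
  grind [graftAux_le_iff, Finset.disjoint_left]

theorem graftAux_le_iff_left {x y : α} (hx : x ∈ T'.carrier) :
    (G).le x y ↔ T'.le x y := by
  have := T''.mem_of_le (x := x) (y := y)
  have := T''.mem_of_le (x := x) (y := v)
  grind [graftAux_le_iff, Finset.disjoint_left]

theorem graftAux_le_iff_cross {x y : α} (hx : x ∈ T''.carrier) (hy : y ∈ T'.carrier) :
    (G).le x y ↔ T''.le x v := by
  have := T'.mem_of_le (x := x) (y := y)
  have := T''.mem_of_le (x := x) (y := y)
  grind [graftAux_le_iff, Finset.disjoint_left]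

theorem graftAux_lt_iff_right {x y : α} (hx : x ∈ T''.carrier) (hy : y ∈ T''.carrier) :
    (G).lt x y ↔ T''.lt x y := by
  rw [lt, lt, graftAux_le_iff_right hd hv hy, graftAux_le_iff_right hd hv hx]

theorem graftAux_lt_iff_cross {x y : α} (hx : x ∈ T''.carrier) (hy : y ∈ T'.carrier) :
    (G).lt x y ↔ T''.le x v := by
  rw [lt, graftAux_le_iff_cross hd hv hx hy, graftAux_le_iff_left hd hv hy]
  exact and_iff_left fun h => Finset.disjoint_left.1 hd (T'.mem_of_le h).2 hx

theorem graftAux_equiv_iff_right {x y : α} (hx : x ∈ T''.carrier) (hy : y ∈ T''.carrier) :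
    (G).equiv x y ↔ T''.equiv x y := by
  rw [equiv, equiv, graftAux_le_iff_right hd hv hy, graftAux_le_iff_right hd hv hx]

theorem graftAux_comparable_iff_right {x y : α} (hx : x ∈ T''.carrier)
    (hy : y ∈ T''.carrier) : ((G).le x y ∨ (G).le y x) ↔ (T''.le x y ∨ T''.le y x) := by
  rw [graftAux_le_iff_right hd hv hy, graftAux_le_iff_right hd hv hx]

theorem graftAux_comparable_iff_cross {x p : α} (hx : x ∈ T''.carrier)
    (hp : p ∈ T'.carrier) : ((G).le x p ∨ (G).le p x) ↔ T''.le x v := by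
  rw [graftAux_le_iff_cross hd hv hx hp, graftAux_le_iff_left hd hv hp]
  exact or_iff_left fun h => Finset.disjoint_left.1 hd (T'.mem_of_le h).2 hx

theorem minSet_graftAux : (G).minSet = T''.minSet := by
  ext x
  simp only [mem_minSet, mem_graftAux_carrier]
  constructor
  · rintro ⟨hx, hmin⟩
    have hx₂ : x ∈ T''.carrier := hx.resolve_left fun hx₁ =>
      Finset.disjoint_left.1 hd (T'.mem_of_le ((graftAux_le_iff_left hd hv hx₁).1
        (hmin v ((graftAux_le_iff_cross hd hv hv hx₁).2 (T''.le_refl v hv))))).2 hv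
    refine ⟨hx₂, fun y hyx => ?_⟩
    exact (graftAux_le_iff_right hd hv (T''.mem_of_le hyx).1).1
      (hmin y ((graftAux_le_iff_right hd hv hx₂).2 hyx))
  · rintro ⟨hx₂, hmin⟩
    refine ⟨Or.inr hx₂, fun y hyx => ?_⟩
    exact Or.inr (Or.inl (hmin y ((graftAux_le_iff_right hd hv hx₂).1 hyx)))

theorem below_graftAux_of_subset {Y : Finset α} (hY : Y ⊆ T''.carrier) :
    (G).below Y = T''.below Y := by
  ext x
  simp only [mem_below, mem_graftAux_carrier]
  have := T''.mem_of_le (x := x)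
  have := Finset.disjoint_left.1 hd
  grind [graftAux_le_iff_right]

theorem below_graftAux_union {Y : Finset α} (hvY : v ∈ Y) (hY : Y ⊆ T''.carrier) :
    (G).below (Y ∪ T'.carrier) = T''.below Y := by
  ext x
  simp only [mem_below, mem_graftAux_carrier, Finset.mem_union]
  have := T''.mem_of_le (x := x)
  have := Finset.disjoint_left.1 hd
  grind [graftAux_le_iff_right, graftAux_le_iff_cross]

theorem below_graftAux_left (hne : T'.carrier.Nonempty) :
    (G).below T'.carrier = T''.carrier.filter (T''.le · v) := by
  ext x
  simp only [mem_below, mem_graftAux_carrier, Finset.mem_filter]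
  have := Finset.disjoint_left.1 hd
  grind [graftAux_le_iff_cross]

theorem mem_strictUpper_graftAux {B : Finset α} (hB : B ⊆ T''.carrier) {x : α} :
    x ∈ (G).strictUpper B ↔
      x ∈ T''.strictUpper B ∨ (x ∈ T'.carrier ∧ ∀ y ∈ B, T''.le y v) := by
  show (x ∈ T'.carrier ∪ T''.carrier ∧ _) ↔ _
  rw [Finset.mem_union]
  constructor
  · rintro ⟨hx | hx, hlt⟩
    · exact Or.inr ⟨hx, fun y hy => (graftAux_lt_iff_cross hd hv (hB hy) hx).1 (hlt y hy)⟩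
    · exact Or.inl ⟨hx, fun y hy => (graftAux_lt_iff_right hd hv (hB hy) hx).1 (hlt y hy)⟩
  · rintro (⟨hx, hlt⟩ | ⟨hx, hle⟩)
    · exact ⟨Or.inr hx, fun y hy => (graftAux_lt_iff_right hd hv (hB hy) hx).2 (hlt y hy)⟩
    · exact ⟨Or.inl hx, fun y hy => (graftAux_lt_iff_cross hd hv (hB hy) hx).2 (hle y hy)⟩

theorem mapsToMinBag_graftAux_iff {B : Finset α} (hB : B ⊆ T''.carrier) :
    (G).MapsToMinBag B ↔ T''.MapsToMinBag B := by
  simp only [MapsToMinBag, minSet_graftAux]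
  exact exists_congr fun w => and_congr_right fun hw => and_congr_right fun _ =>
    forall₂_congr fun x hx => graftAux_equiv_iff_right hd hv (hB hx) (hB hw)

theorem subset_of_mapsToMinBag_graftAux {B : Finset α} (h : (G).MapsToMinBag B) :
    B ⊆ T''.carrier := by
  obtain ⟨w, -, hw, hequiv⟩ := h
  rw [minSet_graftAux] at hw
  intro x hx
  exact (T''.mem_of_le ((graftAux_le_iff_right hd hv (mem_minSet.1 hw).1).1
    (hequiv x hx).1)).1

theorem isUpper_graftAux_union_iff {Y : Finset α} (hY : Y ⊆ T''.carrier) :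
    (G).IsUpper (Y ∪ T'.carrier) ↔ T''.IsUpper Y := by
  simp only [IsUpper, Finset.mem_union]
  constructor
  · intro h x hx z hz
    exact (h x (Or.inl hx) z (Or.inr (Or.inl hz))).resolve_right
      fun hz₁ => Finset.disjoint_left.1 hd hz₁ (T''.mem_of_le hz).2
  · rintro h x (hx | hx) z hz
    · rcases hz with hz | hz | ⟨-, hz⟩
      · exact absurd (hY hx) (Finset.disjoint_left.1 hd (T'.mem_of_le hz).1)
      · exact Or.inl (h x hx z hz)
      · exact Or.inr hz
    · exact Or.inr (T'.mem_of_le ((graftAux_le_iff_left hd hv hx).1 hz)).2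

theorem isUpper_graftAux_iff {Y : Finset α} (hY : Y ⊆ T''.carrier) (hvY : v ∉ Y) :
    (G).IsUpper Y ↔ T''.IsUpper Y := by
  refine ⟨fun h x hx z hz => h x hx z (Or.inr (Or.inl hz)), fun h x hx z hz => ?_⟩
  rcases hz with hz | hz | ⟨hxv, -⟩
  · exact absurd (hY hx) (Finset.disjoint_left.1 hd (T'.mem_of_le hz).1)
  · exact h x hx z hz
  · exact absurd (h x hx v hxv) hvY

theorem connOn_graftAux_union_iff (hT' : T'.Connected) {Y : Finset α} (hY : Y ⊆ T''.carrier)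
    (hvY : v ∈ Y) : (G).ConnOn (↑Y ∪ ↑T'.carrier) ↔ T''.ConnOn Y := by
  have h₁₂ := Finset.disjoint_left.1 hd
  constructor
  · -- contract `X₁` onto the vertex `v` it is grafted on
    intro hconn
    refine hconn.map (fun x => if x ∈ T'.carrier then v else x) ?_ ?_ ?_
    · intro x hx
      by_cases hx₁ : x ∈ T'.carrier
      · simpa [hx₁] using hvY
      · simpa [hx₁] using hx.resolve_right hx₁
    · exact fun x hx => ⟨x, Or.inl hx, if_neg fun h => h₁₂ h (hY hx)⟩
    · intro a ha b hb hab
      simp only [Set.mem_union, Finset.mem_coe] at ha hb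
      rcases ha with ha | ha <;> rcases hb with hb | hb
      · simp only [if_neg fun h => h₁₂ h (hY ha), if_neg fun h => h₁₂ h (hY hb)]
        exact Or.inr (Or.inl ((graftAux_le_iff_right hd hv (hY hb)).1 hab))
      · simp only [if_neg fun h => h₁₂ h (hY ha), if_pos hb]
        exact Or.inr (Or.inl ((graftAux_le_iff_cross hd hv (hY ha) hb).1 hab))
      · exact absurd ((graftAux_le_iff_left hd hv ha).1 hab) fun h =>
          h₁₂ (T'.mem_of_le h).2 (hY hb)
      · simp [ha, hb]
  · intro hconn
    obtain ⟨p, hp⟩ := hT'.1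
    exact (hconn.mono_le fun a _ b hb => (graftAux_le_iff_right hd hv (hY hb)).2).union
      (hT'.2.mono_le fun a ha _ _ => (graftAux_le_iff_left hd hv ha).2) hvY hp
      ((graftAux_le_iff_cross hd hv hv hp).2 (T''.le_refl v hv))

theorem isCC_graftAux_iff {Y B : Finset α} (hY : Y ⊆ T''.carrier) (hvY : v ∉ Y)
    (hup : T''.IsUpper Y) (hB : B ⊆ T''.carrier) :
    (G).IsCC ((G).strictUpper B) Y ↔ T''.IsCC (T''.strictUpper B) Y := by
  have hSU := fun x => mem_strictUpper_graftAux hd hv hB (x := x)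
  have hSU₂ : ∀ x ∈ T''.carrier, x ∈ (G).strictUpper B ↔ x ∈ T''.strictUpper B :=
    fun x hx => (hSU x).trans (or_iff_left fun h => Finset.disjoint_left.1 hd h.1 hx)
  refine and_congr Iff.rfl (and_congr ?_ (and_congr ?_ ?_))
  · exact ⟨fun h x hx => (hSU₂ x (hY hx)).1 (h hx), fun h x hx => (hSU₂ x (hY hx)).2 (h hx)⟩
  · exact ⟨fun h => h.mono_le fun a _ b hb => (graftAux_le_iff_right hd hv (hY hb)).1,
      fun h => h.mono_le fun a _ b hb => (graftAux_le_iff_right hd hv (hY hb)).2⟩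
  · constructor
    · intro h x hx y hy hxy
      exact h x hx y ((hSU y).2 (Or.inl hy))
        ((graftAux_comparable_iff_right hd hv (hY hx) hy.1).2 hxy)
    · intro h x hx y hy hxy
      rcases (hSU y).1 hy with hy | ⟨hy₁, -⟩
      · exact h x hx y hy ((graftAux_comparable_iff_right hd hv (hY hx) hy.1).1 hxy)
      · exact absurd
          (hup x hx v ((graftAux_comparable_iff_cross hd hv (hY hx) hy₁).1 hxy)) hvY

theorem isCC_graftAux_union_iff (hT' : T'.Connected) {Y B : Finset α}
    (hY : Y ⊆ T''.carrier) (hvY : v ∈ Y) (hB : B ⊆ T''.carrier) :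
    (G).IsCC ((G).strictUpper B) ↑(Y ∪ T'.carrier) ↔ T''.IsCC (T''.strictUpper B) Y := by
  have hSU := fun x => mem_strictUpper_graftAux hd hv hB (x := x)
  have h₁₂ := Finset.disjoint_left.1 hd
  rw [IsCC, IsCC, Finset.coe_union, connOn_graftAux_union_iff hd hv hT' hY hvY]
  constructor
  · rintro ⟨-, hsub, hconn, hclosed⟩
    refine ⟨⟨v, hvY⟩, fun x hx => ?_, hconn, fun x hx y hy hxy => ?_⟩
    · exact ((hSU x).1 (hsub (Or.inl hx))).resolve_right fun h => h₁₂ h.1 (hY hx)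
    · exact (hclosed x (Or.inl hx) y ((hSU y).2 (Or.inl hy))
        ((graftAux_comparable_iff_right hd hv (hY hx) hy.1).2 hxy)).resolve_right
          fun h => h₁₂ h hy.1
  · rintro ⟨-, hsub, hconn, hclosed⟩
    have hBv : ∀ y ∈ B, T''.le y v := fun y hy => ((hsub hvY).2 y hy).1
    refine ⟨⟨v, Or.inl hvY⟩, ?_, hconn, fun x hx y hy hxy => ?_⟩
    · rintro x (hx | hx)
      · exact (hSU x).2 (Or.inl (hsub hx))
      · exact (hSU x).2 (Or.inr ⟨hx, hBv⟩)
    · rcases (hSU y).1 hy with hy | ⟨hy₁, -⟩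
      · refine Or.inl ?_
        rcases hx with hx | hx₁
        · exact hclosed x hx y hy ((graftAux_comparable_iff_right hd hv (hY hx) hy.1).1 hxy)
        · exact hclosed v hvY y hy
            (Or.inr ((graftAux_comparable_iff_cross hd hv hy.1 hx₁).1 hxy.symm))
      · exact Or.inr hy₁

theorem circ_graftAux_iff {Y : Finset α} (hY : Y ⊆ T''.carrier) (hvY : v ∉ Y) :
    (G).Circ Y ↔ T''.Circ Y := by
  rw [circ_iff, circ_iff, below_graftAux_of_subset hd hv hY, isUpper_graftAux_iff hd hv hY hvY,
    mapsToMinBag_graftAux_iff hd hv (below_subset _ _)]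
  exact and_congr_right fun hup => and_congr_right fun _ =>
    isCC_graftAux_iff hd hv hY hvY hup (below_subset _ _)

theorem circ_graftAux_union_iff (hT' : T'.Connected) {Y : Finset α} (hY : Y ⊆ T''.carrier)
    (hvY : v ∈ Y) : (G).Circ (Y ∪ T'.carrier) ↔ T''.Circ Y := by
  rw [circ_iff, circ_iff, below_graftAux_union hd hv hvY hY, isUpper_graftAux_union_iff hd hv hY,
    mapsToMinBag_graftAux_iff hd hv (below_subset _ _),
    isCC_graftAux_union_iff hd hv hT' hY hvY (below_subset _ _)]

theorem circ_graftAux_left_iff (hT' : T'.Connected) :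
    (G).Circ T'.carrier ↔ v ∈ T''.minSet := by
  rw [circ_iff, below_graftAux_left hd hv hT'.1]
  set B := T''.carrier.filter (T''.le · v)
  have hB : B ⊆ T''.carrier := Finset.filter_subset _ _
  have hvB : v ∈ B := Finset.mem_filter.2 ⟨hv, T''.le_refl v hv⟩
  have hSU := fun x => mem_strictUpper_graftAux hd hv hB (x := x)
  have hup : (G).IsUpper T'.carrier := fun x hx z hz =>
    (T'.mem_of_le ((graftAux_le_iff_left hd hv hx).1 hz)).2
  have hcc : (G).IsCC ((G).strictUpper B) T'.carrier := by
    refine ⟨hT'.1, fun x hx => (hSU x).2 (Or.inr ⟨hx, fun y hy => (Finset.mem_filter.1 hy).2⟩),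
      hT'.2.mono_le fun a ha _ _ => (graftAux_le_iff_left hd hv ha).2, ?_⟩
    intro x hx y hy hxy
    rcases (hSU y).1 hy with hy | ⟨hy₁, -⟩
    · -- `y` would lie in `B`, hence strictly below itself
      have hyB : y ∈ B := Finset.mem_filter.2
        ⟨hy.1, (graftAux_comparable_iff_cross hd hv hy.1 hx).1 hxy.symm⟩
      exact absurd (hy.2 y hyB).1 (hy.2 y hyB).2
    · exact hy₁
  rw [mapsToMinBag_graftAux_iff hd hv hB]
  simp only [hup, hcc, true_and, and_true]
  constructor
  · rintro ⟨w, -, hw, hequiv⟩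
    exact mem_minSet_of_equiv (hequiv v hvB) hw
  · intro hvmin
    refine ⟨v, hvB, hvmin, fun x hx => ?_⟩
    have hxv := (Finset.mem_filter.1 hx).2
    exact ⟨hxv, (mem_minSet.1 hvmin).2 x hxv⟩

theorem circ_graftAux_cases (hT' : T'.Connected) {Z : Finset α} (hZ : Z ⊆ (G).carrier)
    (h : (G).Circ Z) :
    Z = T'.carrier ∨ (v ∈ Z ∧ T'.carrier ⊆ Z) ∨ (Z ⊆ T''.carrier ∧ v ∉ Z) := by
  obtain ⟨hup, hbag, hcc⟩ := circ_iff.1 h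
  have hSU := fun x =>
    mem_strictUpper_graftAux hd hv (subset_of_mapsToMinBag_graftAux hd hv hbag) (x := x)
  have h₁₂ := Finset.disjoint_left.1 hd
  by_cases hZ₁ : ∃ p ∈ Z, p ∈ T'.carrier
  · obtain ⟨p, hpZ, hp⟩ := hZ₁
    obtain ⟨-, hBv⟩ := ((hSU p).1 (hcc.2.1 hpZ)).resolve_left fun h => h₁₂ hp h.1
    have hX₁ : T'.carrier ⊆ Z := by
      exact_mod_cast hcc.subset_of_connOn
        (hT'.2.mono_le fun a ha _ _ => (graftAux_le_iff_left hd hv ha).2)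
        (fun x hx => (hSU x).2 (Or.inr ⟨hx, hBv⟩)) hp hpZ
    by_cases hvZ : v ∈ Z
    · exact Or.inr (Or.inl ⟨hvZ, hX₁⟩)
    · refine Or.inl (Finset.Subset.antisymm (fun x hx => ?_) hX₁)
      by_contra hx₁
      have hx₂ : x ∈ T''.carrier := (Finset.mem_union.1 (hZ hx)).resolve_left hx₁
      -- a chain in `Z` from `x ∈ X₂` to `p ∈ X₁` crosses from `X₂` to `X₁` below `v`
      obtain ⟨a, b, ⟨ha, hb, hab⟩, ha₂, hb₂⟩ :=
        (hcc.2.2.1 x hx p hpZ).exists_crossing (p := (· ∈ T''.carrier)) hx₂ (h₁₂ hp)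
      have hb₁ : b ∈ T'.carrier := (Finset.mem_union.1 (hZ hb)).resolve_right hb₂
      exact hvZ (hup a ha v (Or.inr (Or.inl
        ((graftAux_comparable_iff_cross hd hv ha₂ hb₁).1 hab))))
  · simp only [not_exists, not_and] at hZ₁
    obtain ⟨p, hp⟩ := hT'.1
    refine Or.inr (Or.inr ⟨fun x hx => (Finset.mem_union.1 (hZ hx)).resolve_left (hZ₁ x hx),
      fun hvZ => hZ₁ p (hup v hvZ p ?_) hp⟩)
    exact (graftAux_le_iff_cross hd hv hv hp).2 (T''.le_refl v hv)

theorem circSet_graftAux (hT' : T'.Connected) :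
    (G).circSet = T''.circSet.image (graftSet T' v) ∪
      ({T'.carrier} : Finset (Finset α)).filter fun _ => v ∈ T''.minSet := by
  ext Z
  simp only [Finset.mem_union, Finset.mem_image, Finset.mem_filter, Finset.mem_singleton,
    mem_circSet]
  constructor
  · rintro ⟨hZs, hZ⟩
    rcases circ_graftAux_cases hd hv hT' hZs hZ with rfl | ⟨hvZ, hX₁⟩ | ⟨hZ₂, hvZ⟩
    · exact Or.inr ⟨rfl, (circ_graftAux_left_iff hd hv hT').1 hZ⟩
    · have hZY : Z = Z ∩ T''.carrier ∪ T'.carrier := by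
        ext x
        have := hZs (x := x)
        have := hX₁ (x := x)
        simp only [Finset.mem_union, Finset.mem_inter, mem_graftAux_carrier] at *
        tauto
      have hvY : v ∈ Z ∩ T''.carrier := Finset.mem_inter.2 ⟨hvZ, hv⟩
      refine Or.inl ⟨Z ∩ T''.carrier, ⟨Finset.inter_subset_right, ?_⟩,
        by rw [graftSet, if_pos hvY, ← hZY]⟩
      rw [← circ_graftAux_union_iff hd hv hT' Finset.inter_subset_right hvY, ← hZY]
      exact hZ
    · exact Or.inl ⟨Z, ⟨hZ₂, (circ_graftAux_iff hd hv hZ₂ hvZ).1 hZ⟩, if_neg hvZ⟩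
  · rintro (⟨Y, ⟨hYs, hY⟩, rfl⟩ | ⟨rfl, hvmin⟩)
    · by_cases hvY : v ∈ Y
      · rw [graftSet, if_pos hvY]
        exact ⟨Finset.union_subset (hYs.trans Finset.subset_union_right)
          Finset.subset_union_left, (circ_graftAux_union_iff hd hv hT' hYs hvY).2 hY⟩
      · rw [graftSet, if_neg hvY]
        exact ⟨hYs.trans Finset.subset_union_right, (circ_graftAux_iff hd hv hYs hvY).2 hY⟩
    · exact ⟨Finset.subset_union_left, (circ_graftAux_left_iff hd hv hT').2 hvmin⟩

theorem restrict_graftAux_of_subset {S : Finset α} (hS : S ⊆ T''.carrier) :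
    (G).restrict S = T''.restrict S := by
  refine FinPre.ext ?_ (funext₂ fun x y => propext ?_)
  · show (T'.carrier ∪ T''.carrier) ∩ S = T''.carrier ∩ S
    rw [Finset.union_inter_distrib_right, Finset.disjoint_iff_inter_eq_empty.1
      (hd.mono_right hS), Finset.empty_union]
  · show (G).le x y ∧ x ∈ S ∧ y ∈ S ↔ T''.le x y ∧ x ∈ S ∧ y ∈ S
    rw [and_congr_left fun h => graftAux_le_iff_right hd hv (hS h.2)]

theorem restrict_graftAux_left : (G).restrict T'.carrier = T' := by
  refine FinPre.ext Finset.union_inter_cancel_left (funext₂ fun x y => propext ?_)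
  show (G).le x y ∧ x ∈ T'.carrier ∧ y ∈ T'.carrier ↔ T'.le x y
  exact ⟨fun ⟨h, hx, _⟩ => (graftAux_le_iff_left hd hv hx).1 h,
    fun h => ⟨Or.inl h, T'.mem_of_le h⟩⟩

theorem restrict_graftAux_union {Y : Finset α} (hvY : v ∈ Y) :
    (G).restrict (Y ∪ T'.carrier) = graft T' (T''.restrict Y) v := by
  rw [graft_eq_graftAux (hd.mono_right Finset.inter_subset_left) (Finset.mem_inter.2 ⟨hv, hvY⟩)]
  refine FinPre.ext ?_ (funext₂ fun x y => propext ?_)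
  · show (T'.carrier ∪ T''.carrier) ∩ (Y ∪ T'.carrier) = T'.carrier ∪ T''.carrier ∩ Y
    ext x
    simp only [Finset.mem_union, Finset.mem_inter]
    tauto
  · show (G).le x y ∧ x ∈ Y ∪ T'.carrier ∧ y ∈ Y ∪ T'.carrier ↔
      T'.le x y ∨ (T''.le x y ∧ x ∈ Y ∧ y ∈ Y) ∨
        ((T''.le x v ∧ x ∈ Y ∧ v ∈ Y) ∧ y ∈ T'.carrier)
    have := Finset.disjoint_left.1 hd
    have := T'.mem_of_le (x := x) (y := y)
    have := T''.mem_of_le (x := x) (y := y)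
    have := T''.mem_of_le (x := x) (y := v)
    simp only [graftAux_le_iff, Finset.mem_union]
    grind

theorem restrict_graftAux_sdiff_union (Y : Finset α) :
    (G).restrict ((G).carrier \ (Y ∪ T'.carrier)) = T''.restrict (T''.carrier \ Y) := by
  rw [← restrict_graftAux_of_subset hd hv Finset.sdiff_subset]
  refine restrict_congr ?_
  ext x
  have : x ∈ T'.carrier → x ∉ T''.carrier := fun h => Finset.disjoint_left.1 hd h
  simp only [Finset.mem_inter, Finset.mem_sdiff, Finset.mem_union, mem_graftAux_carrier]
  tauto

theorem restrict_graftAux_sdiff {Y : Finset α} (hY : Y ⊆ T''.carrier) (hvY : v ∉ Y) :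
    (G).restrict ((G).carrier \ Y) = graft T' (T''.restrict (T''.carrier \ Y)) v := by
  rw [← restrict_graftAux_union hd hv (Finset.mem_sdiff.2 ⟨hv, hvY⟩)]
  refine restrict_congr ?_
  ext x
  have : x ∈ T'.carrier → x ∉ T''.carrier := fun h => Finset.disjoint_left.1 hd h
  have := hY (x := x)
  simp only [Finset.mem_inter, Finset.mem_sdiff, Finset.mem_union, mem_graftAux_carrier]
  tauto

theorem restrict_graftAux_sdiff_left : (G).restrict ((G).carrier \ T'.carrier) = T'' := by
  refine (restrict_congr ?_).trans
    ((restrict_graftAux_of_subset hd hv subset_rfl).trans T''.restrict_carrier)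
  ext x
  have : x ∈ T'.carrier → x ∉ T''.carrier := fun h => Finset.disjoint_left.1 hd h
  simp only [Finset.mem_inter, Finset.mem_sdiff, mem_graftAux_carrier]
  tauto

theorem delta_graftAux (hT' : T'.Connected) :
    (G).delta = (T''.minSet.card : ℚ)⁻¹ •
      ((∑ Y ∈ T''.circSet,
          if v ∈ Y then
            Finsupp.single (graft T' (T''.restrict Y) v, T''.restrict (T''.carrier \ Y)) 1
          else
            Finsupp.single (T''.restrict Y, graft T' (T''.restrict (T''.carrier \ Y)) v) 1) +
        if v ∈ T''.minSet then Finsupp.single (T', T'') 1 else 0) := by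
  have hinj : Set.InjOn (graftSet T' v) T''.circSet := fun Y₁ h₁ Y₂ h₂ heq => by
    rw [← graftSet_inter hd v (mem_circSet.1 h₁).1, heq, graftSet_inter hd v (mem_circSet.1 h₂).1]
  have hdisj : Disjoint (T''.circSet.image (graftSet T' v))
      (({T'.carrier} : Finset (Finset α)).filter fun _ => v ∈ T''.minSet) := by
    refine Finset.disjoint_left.2 fun Z hZ hZ₁ => ?_
    obtain ⟨Y, hY, rfl⟩ := Finset.mem_image.1 hZ
    have hYe : Y = ∅ := by
      rw [← graftSet_inter hd v (mem_circSet.1 hY).1,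
        Finset.mem_singleton.1 (Finset.mem_filter.1 hZ₁).1,
        Finset.disjoint_iff_inter_eq_empty.1 hd]
    exact (mem_circSet.1 hY).2.nonempty.ne_empty hYe
  rw [delta, minSet_graftAux, circSet_graftAux hd hv hT', Finset.sum_union hdisj,
    Finset.sum_image hinj, Finset.sum_filter, Finset.sum_singleton]
  congr 2
  · refine Finset.sum_congr rfl fun Y hY => ?_
    by_cases hvY : v ∈ Y
    · rw [graftSet, if_pos hvY, if_pos hvY, restrict_graftAux_union hd hv hvY,
        restrict_graftAux_sdiff_union]
    · rw [graftSet, if_neg hvY, if_neg hvY, restrict_graftAux_of_subset hd hv (mem_circSet.1 hY).1,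
        restrict_graftAux_sdiff hd hv (mem_circSet.1 hY).1 hvY]
  · split_ifs
    · rw [restrict_graftAux_left, restrict_graftAux_sdiff_left]
    · rfl

end Graft

end FinPre

/-- Compatibility of the coproduct `δ` with the pre-Lie product `↘` on
finite connected preorders:
`δ(T' ↘ T'') = T' ⊗ T'' + (T' ⊗ 1) ↘ δ(T'') + (1 ⊗ T') ↘ δ(T'')`, in the explicit form
`Σ_{v ∈ X₂} δ(T' ↘_v T'') = T' ⊗ T'' + (1/|min(T'')|) Σ_{Y ◎ T''}
[(T' ↘ T''|_Y) ⊗ T''|_{X₂\Y} + T''|_Y ⊗ (T' ↘ T''|_{X₂\Y})]`. -/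
theorem delta_graft_preorder {α : Type*} [DecidableEq α] (T' T'' : FinPre α)
    (hT' : T'.Connected) (hT'' : T''.Connected)
    (hd : Disjoint T'.carrier T''.carrier) :
    (∑ v ∈ T''.carrier, FinPre.delta (FinPre.graft T' T'' v))
      = Finsupp.single (T', T'') (1 : ℚ)
        + ((T''.minSet.card : ℚ))⁻¹ • ∑ Y ∈ T''.circSet,
          ((∑ v ∈ (T''.restrict Y).carrier,
              Finsupp.single
                (FinPre.graft T' (T''.restrict Y) v,
                  T''.restrict (T''.carrier \ Y)) (1 : ℚ))
            + ∑ v ∈ (T''.restrict (T''.carrier \ Y)).carrier,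
              Finsupp.single
                (T''.restrict Y,
                  FinPre.graft T' (T''.restrict (T''.carrier \ Y)) v) (1 : ℚ)) := by
  have hmin : (T''.minSet.card : ℚ) ≠ 0 :=
    Nat.cast_ne_zero.2 (Finset.card_ne_zero.2 (FinPre.minSet_nonempty hT''.1))
  have hcount : ∑ v ∈ T''.carrier,
      (if v ∈ T''.minSet then Finsupp.single (T', T'') (1 : ℚ) else 0) =
        (T''.minSet.card : ℚ) • Finsupp.single (T', T'') 1 := by
    rw [Finset.sum_ite_mem, Finset.inter_eq_right.2 T''.minSet_subset, Finset.sum_const,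
      Nat.cast_smul_eq_nsmul]
  rw [Finset.sum_congr rfl fun v hv => by
      rw [FinPre.graft_eq_graftAux hd hv, FinPre.delta_graftAux hd hv hT'],
    ← Finset.smul_sum, Finset.sum_add_distrib, Finset.sum_comm, hcount, smul_add, smul_smul,
    inv_mul_cancel₀ hmin, one_smul, add_comm]
  simp only [FinPre.sum_ite_mem_eq_restrict]
end

section
/- Let T, T', T'' be finite connected preorders, with T on the set X. Then the set A = { (Y, σ₁, σ₂) : Y ◎ T, σ₁ an isomorphism from T|_Y to T', σ₂ an isomorphism from T|_{X\Y} to T'' } is in bijection with the set C = { (v̄, σ) : v ∈ min(T''), σ an isomorphism from T to T' ↘_v T'' }, where v̄ denotes the bag of v; in particular |A| = |C|. -/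
open scoped Classical

/-- The set `A` of triples `(Y, σ₁, σ₂)` with `Y ◎ T`, `σ₁ : T|_Y ≅ T'` and
`σ₂ : T|_{X\Y} ≅ T''`. -/
def TripleSetPre {α : Type*} [DecidableEq α] (T T' T'' : FinPre α) :
    Set (Finset α × (α → α) × (α → α)) :=
  {p | T.Circ p.1 ∧ p.2.1 ∈ FinPre.Isos (T.restrict p.1) T' ∧
    p.2.2 ∈ FinPre.Isos (T.restrict (T.carrier \ p.1)) T''}

/-- The set `C` of pairs `(v̄, σ)` where `v ∈ min(T'')`, `v̄` is its bag and
`σ : T ≅ T' ↘_v T''`. -/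
def BagIsoSetPre {α : Type*} [DecidableEq α] (T T' T'' : FinPre α) :
    Set (Finset α × (α → α)) :=
  {q | ∃ v ∈ T''.minSet, q.1 = T''.bag v ∧ q.2 ∈ FinPre.Isos T (FinPre.graft T' T'' v)}

section Aux

variable {α : Type*} [DecidableEq α]

open FinPre

lemma FP_equiv_symm {T : FinPre α} {a b : α} (h : T.equiv a b) : T.equiv b a := ⟨h.2, h.1⟩

lemma FP_equiv_trans {T : FinPre α} {a b c : α} (h1 : T.equiv a b) (h2 : T.equiv b c) :
    T.equiv a c := ⟨T.le_trans h1.1 h2.1, T.le_trans h2.2 h1.2⟩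

lemma FP_bag_eq_of_equiv {T : FinPre α} {a b : α} (h : T.equiv a b) : T.bag a = T.bag b := by
  unfold FinPre.bag
  ext x
  rw [Finset.mem_filter, Finset.mem_filter]
  exact ⟨fun ⟨h1, h2⟩ => ⟨h1, FP_equiv_trans h2 h⟩,
    fun ⟨h1, h2⟩ => ⟨h1, FP_equiv_trans h2 (FP_equiv_symm h)⟩⟩

lemma FP_mem_minSet {T : FinPre α} {x : α} :
    x ∈ T.minSet ↔ x ∈ T.carrier ∧ ∀ y, T.le y x → T.le x y := Finset.mem_filter

lemma FP_mem_below {T : FinPre α} {Y : Finset α} {x : α} :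
    x ∈ T.below Y ↔ (x ∈ T.carrier ∧ x ∉ Y) ∧ ∃ y ∈ Y, T.le x y := by
  unfold FinPre.below
  rw [Finset.mem_filter, Finset.mem_sdiff]

lemma FP_restrict_le (T : FinPre α) (S : Finset α) (x y : α) :
    (T.restrict S).le x y ↔ (T.le x y ∧ x ∈ S ∧ y ∈ S) := Iff.rfl

lemma FP_restrict_carrier {T : FinPre α} {S : Finset α} (h : S ⊆ T.carrier) :
    (T.restrict S).carrier = S := Finset.inter_eq_right.mpr h

lemma FP_graftAux_le (T' T'' : FinPre α) (v : α) (hd : Disjoint T'.carrier T''.carrier)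
    (hv : v ∈ T''.carrier) (x y : α) :
    (T'.graftAux T'' v hd hv).le x y ↔
      (T'.le x y ∨ T''.le x y ∨ (T''.le x v ∧ y ∈ T'.carrier)) := Iff.rfl

lemma FP_graftAux_carrier (T' T'' : FinPre α) (v : α) (hd : Disjoint T'.carrier T''.carrier)
    (hv : v ∈ T''.carrier) :
    (T'.graftAux T'' v hd hv).carrier = T'.carrier ∪ T''.carrier := rfl

lemma FP_circ_subset {T : FinPre α} {Y : Finset α} (hc : T.Circ Y) : Y ⊆ T.carrier := by
  obtain ⟨-, w0, -, -, -, hcc⟩ := hc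
  intro x hx
  have h : x ∈ T.carrier ∧ ∀ y ∈ T.below Y, T.lt y x := hcc.2.1 (Finset.mem_coe.mpr hx)
  exact h.1

lemma FP_circ_bag_min {T : FinPre α} {Y : Finset α} (hc : T.Circ Y) {w : α}
    (hw : w ∈ T.below Y) :
    w ∈ T.minSet ∧ (∀ x ∈ T.below Y, T.equiv x w) ∧ ∀ x ∈ T.below Y, ∀ y ∈ Y, T.lt x y := by
  obtain ⟨hup, w0, hw0, hw0min, hbag, hcc⟩ := hc
  have hww0 : T.equiv w w0 := hbag w hw
  have hmin : w ∈ T.minSet := by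
    rw [FP_mem_minSet]
    refine ⟨(FP_mem_below.1 hw).1.1, fun y hy => ?_⟩
    exact T.le_trans hww0.1 ((FP_mem_minSet.1 hw0min).2 y (T.le_trans hy hww0.1))
  refine ⟨hmin, fun x hx => FP_equiv_trans (hbag x hx) (FP_equiv_symm hww0),
    fun x hx y hy => ?_⟩
  have h : y ∈ T.carrier ∧ ∀ z ∈ T.below Y, T.lt z y := hcc.2.1 (Finset.mem_coe.mpr hy)
  exact h.2 x hx

lemma FP_circ_le_iff {T : FinPre α} {Y : Finset α} (hc : T.Circ Y) {w : α}
    (hw : w ∈ T.below Y) {x y : α} (hx : x ∈ T.carrier) (hxY : x ∉ Y) (hy : y ∈ Y) :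
    T.le x y ↔ T.le x w := by
  obtain ⟨hmin, hbag, hlt⟩ := FP_circ_bag_min hc hw
  constructor
  · intro h
    exact (hbag x (FP_mem_below.2 ⟨⟨hx, hxY⟩, y, hy, h⟩)).1
  · intro h
    exact T.le_trans h (hlt w hw y hy).1

/-- Forward map `A → C`. -/
noncomputable def FPfwdPair (T T'' : FinPre α) (p : Finset α × (α → α) × (α → α)) :
    Finset α × (α → α) :=
  if h : (T.below p.1).Nonempty then
    (T''.bag (p.2.2 h.choose), fun x => if x ∈ p.1 then p.2.1 x else p.2.2 x)
  else (∅, id)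

/-- Backward map `C → A`. -/
noncomputable def FPbwdTriple (T T' : FinPre α) (q : Finset α × (α → α)) :
    Finset α × (α → α) × (α → α) :=
  (T.carrier.filter (fun x => q.2 x ∈ T'.carrier),
   fun x => if x ∈ T.carrier.filter (fun x => q.2 x ∈ T'.carrier) then q.2 x else x,
   fun x => if x ∈ T.carrier \ T.carrier.filter (fun x => q.2 x ∈ T'.carrier) then q.2 x else x)

lemma FP_fwd_mem {T T' T'' : FinPre α} (hd : Disjoint T'.carrier T''.carrier)
    {p : Finset α × (α → α) × (α → α)} (hp : p ∈ TripleSetPre T T' T'') :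
    FPfwdPair T T'' p ∈ BagIsoSetPre T T' T'' := by
  obtain ⟨Y, σ₁, σ₂⟩ := p
  obtain ⟨hc, h1, h2⟩ := hp
  dsimp only at hc h1 h2
  have hYsub : Y ⊆ T.carrier := FP_circ_subset hc
  have hr1 : (T.restrict Y).carrier = Y := FP_restrict_carrier hYsub
  have hr2 : (T.restrict (T.carrier \ Y)).carrier = T.carrier \ Y :=
    FP_restrict_carrier Finset.sdiff_subset
  obtain ⟨hb1, ho1, hi1⟩ := h1
  obtain ⟨hb2, ho2, hi2⟩ := h2
  rw [hr1] at hb1 ho1 hi1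
  rw [hr2] at hb2 ho2 hi2
  have ho1' : ∀ x ∈ Y, ∀ y ∈ Y, (T.le x y ↔ T'.le (σ₁ x) (σ₁ y)) := by
    intro x hx y hy
    constructor
    · intro h; exact (ho1 x hx y hy).1 ⟨h, hx, hy⟩
    · intro h; exact ((ho1 x hx y hy).2 h).1
  have ho2' : ∀ x ∈ T.carrier \ Y, ∀ y ∈ T.carrier \ Y,
      (T.le x y ↔ T''.le (σ₂ x) (σ₂ y)) := by
    intro x hx y hy
    constructor
    · intro h; exact (ho2 x hx y hy).1 ⟨h, hx, hy⟩
    · intro h; exact ((ho2 x hx y hy).2 h).1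
  have hne : (T.below Y).Nonempty := ⟨hc.2.choose, hc.2.choose_spec.1⟩
  simp only [FPfwdPair, dif_pos hne]
  set w := hne.choose with hwdef
  have hw : w ∈ T.below Y := hne.choose_spec
  obtain ⟨hwmin, hbag, hlt⟩ := FP_circ_bag_min hc hw
  have hwD : w ∈ T.carrier \ Y :=
    Finset.mem_sdiff.mpr ⟨(FP_mem_below.1 hw).1.1, (FP_mem_below.1 hw).1.2⟩
  have hvT'' : σ₂ w ∈ T''.carrier := hb2.1 hwD
  have hvmin : σ₂ w ∈ T''.minSet := by
    rw [FP_mem_minSet]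
    refine ⟨hvT'', fun y hy => ?_⟩
    obtain ⟨u, hu, huy⟩ := hb2.2.2 (Finset.mem_coe.mpr (T''.mem_of_le hy).1)
    have hu' : u ∈ T.carrier \ Y := hu
    have hle1 : T.le u w := (ho2' u hu' w hwD).mpr (by rw [huy]; exact hy)
    have hle2 : T.le w u := (FP_mem_minSet.1 hwmin).2 u hle1
    have := (ho2' w hwD u hu').mp hle2
    rw [huy] at this; exact this
  have hGdef : FinPre.graft T' T'' (σ₂ w) = T'.graftAux T'' (σ₂ w) hd hvT'' :=
    dif_pos ⟨hd, hvT''⟩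
  refine ⟨σ₂ w, hvmin, rfl, ?_⟩
  rw [hGdef]
  dsimp only
  refine ⟨⟨?_, ?_, ?_⟩, ?_, ?_⟩
  · -- MapsTo
    intro x hx
    by_cases hxY : x ∈ Y
    · simp only [if_pos hxY]
      exact Finset.mem_coe.mpr (Finset.mem_union_left _ (hb1.1 hxY))
    · simp only [if_neg hxY]
      exact Finset.mem_coe.mpr
        (Finset.mem_union_right _ (hb2.1 (Finset.mem_sdiff.mpr ⟨hx, hxY⟩)))
  · -- InjOn
    intro x hx y hy hxy
    by_cases hxY : x ∈ Y <;> by_cases hyY : y ∈ Y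
    · simp only [if_pos hxY, if_pos hyY] at hxy
      exact hb1.2.1 hxY hyY hxy
    · simp only [if_pos hxY, if_neg hyY] at hxy
      exact absurd (hxy ▸ hb2.1 (Finset.mem_sdiff.mpr ⟨hy, hyY⟩) : σ₁ x ∈ T''.carrier)
        (Finset.disjoint_left.1 hd (hb1.1 hxY))
    · simp only [if_neg hxY, if_pos hyY] at hxy
      exact absurd (hxy ▸ hb1.1 hyY : σ₂ x ∈ T'.carrier)
        (Finset.disjoint_right.1 hd (hb2.1 (Finset.mem_sdiff.mpr ⟨hx, hxY⟩)))
    · simp only [if_neg hxY, if_neg hyY] at hxy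
      exact hb2.2.1 (Finset.mem_sdiff.mpr ⟨hx, hxY⟩) (Finset.mem_sdiff.mpr ⟨hy, hyY⟩) hxy
  · -- SurjOn
    intro z hz
    rcases Finset.mem_union.1 hz with hz' | hz'
    · obtain ⟨x, hx, hxz⟩ := hb1.2.2 (Finset.mem_coe.mpr hz')
      have hx' : x ∈ Y := hx
      exact ⟨x, hYsub hx', by simp only [if_pos hx']; exact hxz⟩
    · obtain ⟨x, hx, hxz⟩ := hb2.2.2 (Finset.mem_coe.mpr hz')
      have hx' : x ∈ T.carrier \ Y := hx
      exact ⟨x, (Finset.mem_sdiff.1 hx').1,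
        by simp only [if_neg (Finset.mem_sdiff.1 hx').2]; exact hxz⟩
  · -- order iso
    intro x hx y hy
    by_cases hxY : x ∈ Y <;> by_cases hyY : y ∈ Y
    · simp only [if_pos hxY, if_pos hyY, FP_graftAux_le]
      constructor
      · intro h; exact Or.inl ((ho1' x hxY y hyY).1 h)
      · rintro (h | h | ⟨h, -⟩)
        · exact (ho1' x hxY y hyY).2 h
        · exact absurd (T''.mem_of_le h).1 (Finset.disjoint_left.1 hd (hb1.1 hxY))
        · exact absurd (T''.mem_of_le h).1 (Finset.disjoint_left.1 hd (hb1.1 hxY))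
    · have hyD : y ∈ T.carrier \ Y := Finset.mem_sdiff.mpr ⟨hy, hyY⟩
      simp only [if_pos hxY, if_neg hyY, FP_graftAux_le]
      constructor
      · intro h; exact absurd (hc.1 x hxY y h) hyY
      · rintro (h | h | ⟨h, -⟩)
        · exact absurd (T'.mem_of_le h).2 (Finset.disjoint_right.1 hd (hb2.1 hyD))
        · exact absurd (T''.mem_of_le h).1 (Finset.disjoint_left.1 hd (hb1.1 hxY))
        · exact absurd (T''.mem_of_le h).1 (Finset.disjoint_left.1 hd (hb1.1 hxY))
    · have hxD : x ∈ T.carrier \ Y := Finset.mem_sdiff.mpr ⟨hx, hxY⟩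
      simp only [if_neg hxY, if_pos hyY, FP_graftAux_le,
        FP_circ_le_iff hc hw hx hxY hyY, ho2' x hxD w hwD]
      constructor
      · intro h; exact Or.inr (Or.inr ⟨h, hb1.1 hyY⟩)
      · rintro (h | h | ⟨h, -⟩)
        · exact absurd (T'.mem_of_le h).1 (Finset.disjoint_right.1 hd (hb2.1 hxD))
        · exact absurd (T''.mem_of_le h).2 (Finset.disjoint_left.1 hd (hb1.1 hyY))
        · exact h
    · have hxD : x ∈ T.carrier \ Y := Finset.mem_sdiff.mpr ⟨hx, hxY⟩
      have hyD : y ∈ T.carrier \ Y := Finset.mem_sdiff.mpr ⟨hy, hyY⟩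
      simp only [if_neg hxY, if_neg hyY, FP_graftAux_le, ho2' x hxD y hyD]
      constructor
      · intro h; exact Or.inr (Or.inl h)
      · rintro (h | h | ⟨-, h2⟩)
        · exact absurd (T'.mem_of_le h).1 (Finset.disjoint_right.1 hd (hb2.1 hxD))
        · exact h
        · exact absurd h2 (Finset.disjoint_right.1 hd (hb2.1 hyD))
  · -- identity outside
    intro x hx
    have hxY : x ∉ Y := fun h => hx (hYsub h)
    simp only [if_neg hxY]
    exact hi2 x (fun h => hx (Finset.mem_sdiff.1 h).1)

lemma FP_bwd_mem {T T' T'' : FinPre α} (hT' : T'.Connected)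
    (hd : Disjoint T'.carrier T''.carrier)
    {q : Finset α × (α → α)} (hq : q ∈ BagIsoSetPre T T' T'') :
    FPbwdTriple T T' q ∈ TripleSetPre T T' T'' := by
  obtain ⟨B, σ⟩ := q
  obtain ⟨v, hvmin, hB, hσ⟩ := hq
  dsimp only at hσ ⊢
  have hvT'' : v ∈ T''.carrier := (FP_mem_minSet.1 hvmin).1
  rw [show FinPre.graft T' T'' v = T'.graftAux T'' v hd hvT'' from dif_pos ⟨hd, hvT''⟩] at hσ
  obtain ⟨hbij, hord, hid⟩ := hσ
  set Y := T.carrier.filter (fun x => σ x ∈ T'.carrier) with hYdef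
  have hYsub : Y ⊆ T.carrier := Finset.filter_subset _ _
  have hmemY : ∀ {x : α}, x ∈ Y ↔ x ∈ T.carrier ∧ σ x ∈ T'.carrier := fun {x} =>
    Finset.mem_filter
  have hσT'' : ∀ {x : α}, x ∈ T.carrier → x ∉ Y → σ x ∈ T''.carrier := by
    intro x hx hxY
    have h0 : σ x ∈ T'.carrier ∪ T''.carrier := hbij.1 hx
    rcases Finset.mem_union.1 h0 with h | h
    · exact absurd (hmemY.2 ⟨hx, h⟩) hxY
    · exact h
  have hup : ∀ x ∈ Y, ∀ z, T.le x z → z ∈ Y := by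
    intro x hx z hxz
    have hx' := hmemY.1 hx
    have hz : z ∈ T.carrier := (T.mem_of_le hxz).2
    have h0 := (hord x hx'.1 z hz).1 hxz
    rw [FP_graftAux_le] at h0
    rcases h0 with h | h | ⟨h, -⟩
    · exact hmemY.2 ⟨hz, (T'.mem_of_le h).2⟩
    · exact absurd (T''.mem_of_le h).1 (Finset.disjoint_left.1 hd hx'.2)
    · exact absurd (T''.mem_of_le h).1 (Finset.disjoint_left.1 hd hx'.2)
  have hYne : Y.Nonempty := by
    obtain ⟨z, hz⟩ := hT'.1
    obtain ⟨x, hx, hxz⟩ := hbij.2.2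
      (Finset.mem_coe.mpr (Finset.mem_union_left T''.carrier hz))
    exact ⟨x, hmemY.2 ⟨hx, by rw [hxz]; exact hz⟩⟩
  have hbelow : ∀ {x : α}, x ∈ T.below Y ↔ (x ∈ T.carrier ∧ x ∉ Y) ∧ T''.le (σ x) v := by
    intro x
    rw [FP_mem_below]
    constructor
    · rintro ⟨⟨hx, hxY⟩, y, hy, hxy⟩
      refine ⟨⟨hx, hxY⟩, ?_⟩
      have hy' := hmemY.1 hy
      have h0 := (hord x hx y hy'.1).1 hxy
      rw [FP_graftAux_le] at h0
      rcases h0 with h | h | ⟨h, -⟩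
      · exact absurd (T'.mem_of_le h).1 (Finset.disjoint_right.1 hd (hσT'' hx hxY))
      · exact absurd (T''.mem_of_le h).2 (Finset.disjoint_left.1 hd hy'.2)
      · exact h
    · rintro ⟨⟨hx, hxY⟩, h⟩
      obtain ⟨y, hy⟩ := hYne
      have hy' := hmemY.1 hy
      exact ⟨⟨hx, hxY⟩, y, hy,
        (hord x hx y hy'.1).2 (by rw [FP_graftAux_le]; exact Or.inr (Or.inr ⟨h, hy'.2⟩))⟩
  obtain ⟨w₀, hw₀T, hw₀v⟩ := hbij.2.2
    (Finset.mem_coe.mpr (Finset.mem_union_right T'.carrier hvT''))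
  have hw₀T' : w₀ ∈ T.carrier := hw₀T
  have hw₀Y : w₀ ∉ Y := fun h =>
    Finset.disjoint_right.1 hd hvT'' (by rw [← hw₀v]; exact (hmemY.1 h).2)
  have hw₀b : w₀ ∈ T.below Y :=
    hbelow.2 ⟨⟨hw₀T', hw₀Y⟩, by rw [hw₀v]; exact T''.le_refl v hvT''⟩
  have hbag : ∀ x ∈ T.below Y, T.equiv x w₀ := by
    intro x hx
    obtain ⟨⟨hxT, hxY⟩, h⟩ := hbelow.1 hx
    have hvle : T''.le v (σ x) := (FP_mem_minSet.1 hvmin).2 _ h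
    constructor
    · exact (hord x hxT w₀ hw₀T').2
        (by rw [FP_graftAux_le, hw₀v]; exact Or.inr (Or.inl h))
    · exact (hord w₀ hw₀T' x hxT).2
        (by rw [FP_graftAux_le, hw₀v]; exact Or.inr (Or.inl hvle))
  have hw₀min : w₀ ∈ T.minSet := by
    rw [FP_mem_minSet]
    refine ⟨hw₀T', fun z hz => ?_⟩
    have hzT : z ∈ T.carrier := (T.mem_of_le hz).1
    have h0 := (hord z hzT w₀ hw₀T').1 hz
    rw [FP_graftAux_le, hw₀v] at h0
    rcases h0 with h | h | ⟨-, hv'⟩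
    · exact absurd (T'.mem_of_le h).2 (Finset.disjoint_right.1 hd hvT'')
    · exact (hord w₀ hw₀T' z hzT).2
        (by rw [FP_graftAux_le, hw₀v]; exact Or.inr (Or.inl ((FP_mem_minSet.1 hvmin).2 _ h)))
    · exact absurd hv' (Finset.disjoint_right.1 hd hvT'')
  have hYS : (↑Y : Set α) ⊆ {x | x ∈ T.carrier ∧ ∀ y ∈ T.below Y, T.lt y x} := by
    intro x hx
    have hx' : x ∈ Y := hx
    have hxm := hmemY.1 hx'
    refine ⟨hxm.1, fun y hy => ?_⟩
    obtain ⟨⟨hyT, hyY⟩, hyv⟩ := hbelow.1 hy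
    refine ⟨(hord y hyT x hxm.1).2
      (by rw [FP_graftAux_le]; exact Or.inr (Or.inr ⟨hyv, hxm.2⟩)), ?_⟩
    intro hxy
    exact hyY (hup x hx' y hxy)
  have hconn : T.ConnOn ↑Y := by
    intro x hx y hy
    have hx' : x ∈ Y := hx
    have hy' : y ∈ Y := hy
    have hchain := hT'.2 (σ x) ((hmemY.1 hx').2) (σ y) ((hmemY.1 hy').2)
    have key : ∀ u : α,
        Relation.ReflTransGen
          (fun a b => a ∈ (↑T'.carrier : Set α) ∧ b ∈ (↑T'.carrier : Set α) ∧
            (T'.le a b ∨ T'.le b a)) u (σ y) →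
        ∀ a, a ∈ Y → σ a = u →
        Relation.ReflTransGen
          (fun a b => a ∈ (↑Y : Set α) ∧ b ∈ (↑Y : Set α) ∧ (T.le a b ∨ T.le b a)) a y := by
      intro u h
      induction h using Relation.ReflTransGen.head_induction_on with
      | refl =>
        intro a ha hau
        have hay : a = y := hbij.2.1 (hYsub ha) (hYsub hy') hau
        rw [hay]
      | head hstep _ ih =>
        intro a ha hau
        obtain ⟨hu1, hc1, hcomp⟩ := hstep
        obtain ⟨m, hmT, hmc⟩ := hbij.2.2 (Finset.mem_coe.mpr (Finset.mem_union_left _ hc1))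
        have hmT' : m ∈ T.carrier := hmT
        have hmY : m ∈ Y := hmemY.2 ⟨hmT', by rw [hmc]; exact hc1⟩
        have hstep' : a ∈ (↑Y : Set α) ∧ m ∈ (↑Y : Set α) ∧ (T.le a m ∨ T.le m a) := by
          refine ⟨ha, hmY, ?_⟩
          rcases hcomp with h | h
          · exact Or.inl ((hord a (hYsub ha) m hmT').2
              (by rw [FP_graftAux_le, hau, hmc]; exact Or.inl h))
          · exact Or.inr ((hord m hmT' a (hYsub ha)).2
              (by rw [FP_graftAux_le, hau, hmc]; exact Or.inl h))
        exact Relation.ReflTransGen.head hstep' (ih m hmY hmc)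
    exact key (σ x) hchain x hx' rfl
  have hmax : ∀ x ∈ (↑Y : Set α),
      ∀ y ∈ {x | x ∈ T.carrier ∧ ∀ y ∈ T.below Y, T.lt y x},
      (T.le x y ∨ T.le y x) → y ∈ (↑Y : Set α) := by
    intro x hx y hyS hcomp
    have hx' : x ∈ Y := hx
    have hyS' : y ∈ T.carrier ∧ ∀ z ∈ T.below Y, T.lt z y := hyS
    rcases hcomp with h | h
    · exact hup x hx' y h
    · by_contra hyY
      have hyb : y ∈ T.below Y := FP_mem_below.2 ⟨⟨hyS'.1, hyY⟩, x, hx', h⟩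
      exact (hyS'.2 y hyb).2 (hyS'.2 y hyb).1
  have hr1 : (T.restrict Y).carrier = Y := FP_restrict_carrier hYsub
  have hr2 : (T.restrict (T.carrier \ Y)).carrier = T.carrier \ Y :=
    FP_restrict_carrier Finset.sdiff_subset
  simp only [FPbwdTriple, TripleSetPre, Set.mem_setOf_eq, Finset.filter_congr_decidable]
  rw [← hYdef]
  refine ⟨⟨hup, w₀, hw₀b, hw₀min, hbag, ⟨⟨hYne.choose, hYne.choose_spec⟩, hYS, hconn, hmax⟩⟩,
    ?_, ?_⟩
  · -- iso1
    refine ⟨?_, ?_, ?_⟩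
    · rw [hr1]
      refine ⟨fun x hx => ?_, fun x hx y hy hxy => ?_, fun z hz => ?_⟩
      · have hx' : x ∈ Y := hx
        simp only [if_pos hx']
        exact (hmemY.1 hx').2
      · have hx' : x ∈ Y := hx
        have hy' : y ∈ Y := hy
        simp only [if_pos hx', if_pos hy'] at hxy
        exact hbij.2.1 (hYsub hx') (hYsub hy') hxy
      · have hz' : z ∈ T'.carrier := hz
        obtain ⟨x, hx, hxz⟩ := hbij.2.2
          (Finset.mem_coe.mpr (Finset.mem_union_left _ hz'))
        have hx' : x ∈ T.carrier := hx
        have hxY : x ∈ Y := hmemY.2 ⟨hx', by rw [hxz]; exact hz'⟩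
        exact ⟨x, hxY, by simp only [if_pos hxY]; exact hxz⟩
    · intro x hx y hy
      rw [hr1] at hx hy
      simp only [if_pos hx, if_pos hy, FP_restrict_le]
      constructor
      · rintro ⟨hxy, -, -⟩
        have h0 := (hord x (hYsub hx) y (hYsub hy)).1 hxy
        rw [FP_graftAux_le] at h0
        rcases h0 with h | h | ⟨h, -⟩
        · exact h
        · exact absurd (T''.mem_of_le h).1 (Finset.disjoint_left.1 hd (hmemY.1 hx).2)
        · exact absurd (T''.mem_of_le h).1 (Finset.disjoint_left.1 hd (hmemY.1 hx).2)
      · intro h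
        exact ⟨(hord x (hYsub hx) y (hYsub hy)).2
          (by rw [FP_graftAux_le]; exact Or.inl h), hx, hy⟩
    · intro x hx
      rw [hr1] at hx
      simp only [if_neg hx]
  · -- iso2
    refine ⟨?_, ?_, ?_⟩
    · rw [hr2]
      refine ⟨fun x hx => ?_, fun x hx y hy hxy => ?_, fun z hz => ?_⟩
      · have hx' : x ∈ T.carrier \ Y := hx
        simp only [if_pos hx']
        exact hσT'' (Finset.mem_sdiff.1 hx').1 (Finset.mem_sdiff.1 hx').2
      · have hx' : x ∈ T.carrier \ Y := hx
        have hy' : y ∈ T.carrier \ Y := hy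
        simp only [if_pos hx', if_pos hy'] at hxy
        exact hbij.2.1 (Finset.mem_sdiff.1 hx').1 (Finset.mem_sdiff.1 hy').1 hxy
      · have hz' : z ∈ T''.carrier := hz
        obtain ⟨x, hx, hxz⟩ := hbij.2.2
          (Finset.mem_coe.mpr (Finset.mem_union_right _ hz'))
        have hx' : x ∈ T.carrier := hx
        have hxY : x ∉ Y := fun h =>
          Finset.disjoint_right.1 hd hz' (by rw [← hxz]; exact (hmemY.1 h).2)
        have hxD : x ∈ T.carrier \ Y := Finset.mem_sdiff.2 ⟨hx', hxY⟩
        exact ⟨x, hxD, by simp only [if_pos hxD]; exact hxz⟩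
    · intro x hx y hy
      rw [hr2] at hx hy
      have hxT := (Finset.mem_sdiff.1 hx).1
      have hyT := (Finset.mem_sdiff.1 hy).1
      have hxs : σ x ∈ T''.carrier := hσT'' hxT (Finset.mem_sdiff.1 hx).2
      have hys : σ y ∈ T''.carrier := hσT'' hyT (Finset.mem_sdiff.1 hy).2
      simp only [if_pos hx, if_pos hy, FP_restrict_le]
      constructor
      · rintro ⟨hxy, -, -⟩
        have h0 := (hord x hxT y hyT).1 hxy
        rw [FP_graftAux_le] at h0
        rcases h0 with h | h | ⟨-, h2⟩
        · exact absurd (T'.mem_of_le h).1 (Finset.disjoint_right.1 hd hxs)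
        · exact h
        · exact absurd h2 (Finset.disjoint_right.1 hd hys)
      · intro h
        exact ⟨(hord x hxT y hyT).2
          (by rw [FP_graftAux_le]; exact Or.inr (Or.inl h)), hx, hy⟩
    · intro x hx
      rw [hr2] at hx
      simp only [if_neg hx]

lemma FP_bwd_fwd {T T' T'' : FinPre α} (hd : Disjoint T'.carrier T''.carrier)
    {p : Finset α × (α → α) × (α → α)} (hp : p ∈ TripleSetPre T T' T'') :
    FPbwdTriple T T' (FPfwdPair T T'' p) = p := by
  obtain ⟨Y, σ₁, σ₂⟩ := p
  obtain ⟨hc, h1, h2⟩ := hp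
  dsimp only at hc h1 h2
  have hYsub : Y ⊆ T.carrier := FP_circ_subset hc
  have hr1 : (T.restrict Y).carrier = Y := FP_restrict_carrier hYsub
  have hr2 : (T.restrict (T.carrier \ Y)).carrier = T.carrier \ Y :=
    FP_restrict_carrier Finset.sdiff_subset
  have hm1 : ∀ x ∈ Y, σ₁ x ∈ T'.carrier := fun x hx =>
    h1.1.1 (show x ∈ ↑(T.restrict Y).carrier by rw [hr1]; exact hx)
  have hm2 : ∀ x ∈ T.carrier \ Y, σ₂ x ∈ T''.carrier := fun x hx =>
    h2.1.1 (show x ∈ ↑(T.restrict (T.carrier \ Y)).carrier by rw [hr2]; exact hx)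
  have hid1 : ∀ x, x ∉ Y → σ₁ x = x := fun x hx =>
    h1.2.2 x (by rw [hr1]; exact hx)
  have hid2 : ∀ x, x ∉ T.carrier \ Y → σ₂ x = x := fun x hx =>
    h2.2.2 x (by rw [hr2]; exact hx)
  have hne : (T.below Y).Nonempty := ⟨hc.2.choose, hc.2.choose_spec.1⟩
  simp only [FPfwdPair, dif_pos hne]
  have hYeq : T.carrier.filter
      (fun x => (if x ∈ Y then σ₁ x else σ₂ x) ∈ T'.carrier) = Y := by
    ext x
    rw [Finset.mem_filter]
    constructor
    · rintro ⟨hx, hσx⟩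
      by_contra hxY
      rw [if_neg hxY] at hσx
      exact Finset.disjoint_left.1 hd hσx (hm2 x (Finset.mem_sdiff.2 ⟨hx, hxY⟩))
    · intro hx
      exact ⟨hYsub hx, by rw [if_pos hx]; exact hm1 x hx⟩
  simp only [FPbwdTriple, Finset.filter_congr_decidable, Prod.mk.injEq]
  rw [hYeq]
  refine ⟨rfl, funext fun x => ?_, funext fun x => ?_⟩
  · by_cases hxY : x ∈ Y
    · simp only [if_pos hxY]
    · simp only [if_neg hxY]
      exact (hid1 x hxY).symm
  · by_cases hxD : x ∈ T.carrier \ Y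
    · simp only [if_pos hxD, if_neg (Finset.mem_sdiff.1 hxD).2]
    · simp only [if_neg hxD]
      exact (hid2 x hxD).symm

lemma FP_fwd_bwd {T T' T'' : FinPre α} (hT' : T'.Connected)
    (hd : Disjoint T'.carrier T''.carrier)
    {q : Finset α × (α → α)} (hq : q ∈ BagIsoSetPre T T' T'') :
    FPfwdPair T T'' (FPbwdTriple T T' q) = q := by
  obtain ⟨B, σ⟩ := q
  obtain ⟨v, hvmin, hB, hσ⟩ := hq
  dsimp only at hB hσ
  have hvT'' : v ∈ T''.carrier := (FP_mem_minSet.1 hvmin).1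
  rw [show FinPre.graft T' T'' v = T'.graftAux T'' v hd hvT'' from dif_pos ⟨hd, hvT''⟩] at hσ
  obtain ⟨hbij, hord, hid⟩ := hσ
  set Y := T.carrier.filter (fun x => σ x ∈ T'.carrier) with hYdef
  have hYsub : Y ⊆ T.carrier := Finset.filter_subset _ _
  have hmemY : ∀ {x : α}, x ∈ Y ↔ x ∈ T.carrier ∧ σ x ∈ T'.carrier := fun {x} =>
    Finset.mem_filter
  have hσT'' : ∀ {x : α}, x ∈ T.carrier → x ∉ Y → σ x ∈ T''.carrier := by
    intro x hx hxY
    have h0 : σ x ∈ T'.carrier ∪ T''.carrier := hbij.1 hx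
    rcases Finset.mem_union.1 h0 with h | h
    · exact absurd (hmemY.2 ⟨hx, h⟩) hxY
    · exact h
  have hYne : Y.Nonempty := by
    obtain ⟨z, hz⟩ := hT'.1
    obtain ⟨x, hx, hxz⟩ := hbij.2.2
      (Finset.mem_coe.mpr (Finset.mem_union_left T''.carrier hz))
    exact ⟨x, hmemY.2 ⟨hx, by rw [hxz]; exact hz⟩⟩
  have hbelow : ∀ {x : α}, x ∈ T.below Y → T''.le (σ x) v := by
    intro x hx
    obtain ⟨⟨hxT, hxY⟩, y, hy, hxy⟩ := FP_mem_below.1 hx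
    have hy' := hmemY.1 hy
    have h0 := (hord x hxT y hy'.1).1 hxy
    rw [FP_graftAux_le] at h0
    rcases h0 with h | h | ⟨h, -⟩
    · exact absurd (T'.mem_of_le h).1 (Finset.disjoint_right.1 hd (hσT'' hxT hxY))
    · exact absurd (T''.mem_of_le h).2 (Finset.disjoint_left.1 hd hy'.2)
    · exact h
  obtain ⟨w₀, hw₀T, hw₀v⟩ := hbij.2.2
    (Finset.mem_coe.mpr (Finset.mem_union_right T'.carrier hvT''))
  have hw₀T' : w₀ ∈ T.carrier := hw₀T
  have hw₀Y : w₀ ∉ Y := fun h =>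
    Finset.disjoint_right.1 hd hvT'' (by rw [← hw₀v]; exact (hmemY.1 h).2)
  have hw₀b : w₀ ∈ T.below Y := by
    obtain ⟨y, hy⟩ := hYne
    have hy' := hmemY.1 hy
    refine FP_mem_below.2 ⟨⟨hw₀T', hw₀Y⟩, y, hy, ?_⟩
    exact (hord w₀ hw₀T' y hy'.1).2
      (by rw [FP_graftAux_le, hw₀v]; exact Or.inr (Or.inr ⟨T''.le_refl v hvT'', hy'.2⟩))
  simp only [FPbwdTriple, Finset.filter_congr_decidable]
  rw [← hYdef]
  have hne : (T.below Y).Nonempty := ⟨w₀, hw₀b⟩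
  simp only [FPfwdPair, dif_pos hne, Prod.mk.injEq]
  set w := hne.choose with hwdef
  have hw : w ∈ T.below Y := hne.choose_spec
  have hwD : w ∈ T.carrier \ Y :=
    Finset.mem_sdiff.2 ⟨(FP_mem_below.1 hw).1.1, (FP_mem_below.1 hw).1.2⟩
  have hle : T''.le (σ w) v := hbelow hw
  have hge : T''.le v (σ w) := (FP_mem_minSet.1 hvmin).2 _ hle
  constructor
  · rw [if_pos hwD, FP_bag_eq_of_equiv (⟨hle, hge⟩ : T''.equiv (σ w) v), hB]
  · funext x
    by_cases hxY : x ∈ Y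
    · simp only [if_pos hxY]
    · simp only [if_neg hxY]
      by_cases hxT : x ∈ T.carrier
      · simp only [if_pos (Finset.mem_sdiff.2 ⟨hxT, hxY⟩)]
      · have hxD : x ∉ T.carrier \ Y := fun h => hxT (Finset.mem_sdiff.1 h).1
        simp only [if_neg hxD]
        exact (hid x hxT).symm

end Aux

/-- The set
`A = {(Y, σ₁, σ₂) : Y ◎ T, σ₁ : T|_Y ≅ T', σ₂ : T|_{X\Y} ≅ T''}` is in bijection with
`C = {(v̄, σ) : v ∈ min(T''), σ : T ≅ T' ↘_v T''}`; in particular `|A| = |C|`. -/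
theorem tripleSet_equiv_bagIsoSet {α : Type*} [DecidableEq α] (T T' T'' : FinPre α)
    (hT : T.Connected) (hT' : T'.Connected) (hT'' : T''.Connected)
    (hd : Disjoint T'.carrier T''.carrier) :
    Nonempty (↥(TripleSetPre T T' T'') ≃ ↥(BagIsoSetPre T T' T''))
      ∧ Nat.card ↥(TripleSetPre T T' T'') = Nat.card ↥(BagIsoSetPre T T' T'') := by
  have e : ↥(TripleSetPre T T' T'') ≃ ↥(BagIsoSetPre T T' T'') :=
    { toFun := fun p => ⟨FPfwdPair T T'' p.1, FP_fwd_mem hd p.2⟩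
      invFun := fun q => ⟨FPbwdTriple T T' q.1, FP_bwd_mem hT' hd q.2⟩
      left_inv := fun p => Subtype.ext (FP_bwd_fwd hd p.2)
      right_inv := fun q => Subtype.ext (FP_fwd_bwd hT' hd q.2) }
  exact ⟨⟨e⟩, Nat.card_congr e⟩
end

section
/- Let T, T', T'' be finite connected preorders on pairwise disjoint finite sets. Then T' ▷ (T'' ▷ T) = T'' ▷ (T' ▷ T) in the ℚ-vector space with basis the preorders on the union of the three ground sets; equivalently, the formal sum Σ_{u,v ∈ min(T)} T' ↘_u (T'' ↘_v T) equals the formal sum Σ_{u,v ∈ min(T)} T'' ↘_u (T' ↘_v T). (This is the left non-associative permutative (NAP) identity for the product ▷ on finite connected topological spaces.) -/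
open scoped Classical

lemma FinPre.ext' {α : Type*} {A B : FinPre α} (hc : A.carrier = B.carrier)
    (hl : A.le = B.le) : A = B := by
  cases A; cases B; cases hc; cases hl; rfl

lemma graft_swap {α : Type*} [DecidableEq α] (T T' T'' : FinPre α)
    (h12 : Disjoint T'.carrier T''.carrier) (h1 : Disjoint T'.carrier T.carrier)
    (h2 : Disjoint T''.carrier T.carrier) {u v : α} (hu : u ∈ T.carrier)
    (hv : v ∈ T.carrier) :
    FinPre.graft T' (FinPre.graft T'' T v) u = FinPre.graft T'' (FinPre.graft T' T u) v := by
  have hA : Disjoint T''.carrier T.carrier ∧ v ∈ T.carrier := ⟨h2, hv⟩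
  have hB : Disjoint T'.carrier T.carrier ∧ u ∈ T.carrier := ⟨h1, hu⟩
  have gA : FinPre.graft T'' T v = FinPre.graftAux T'' T v hA.1 hA.2 := by
    rw [FinPre.graft, dif_pos hA]
  have gB : FinPre.graft T' T u = FinPre.graftAux T' T u hB.1 hB.2 := by
    rw [FinPre.graft, dif_pos hB]
  rw [gA, gB]
  have hA' : Disjoint T'.carrier (FinPre.graftAux T'' T v hA.1 hA.2).carrier ∧
      u ∈ (FinPre.graftAux T'' T v hA.1 hA.2).carrier := by
    constructor
    · simpa [FinPre.graftAux, Finset.disjoint_union_right] using And.intro h12 h1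
    · simp [FinPre.graftAux, hu]
  have hB' : Disjoint T''.carrier (FinPre.graftAux T' T u hB.1 hB.2).carrier ∧
      v ∈ (FinPre.graftAux T' T u hB.1 hB.2).carrier := by
    constructor
    · simpa [FinPre.graftAux, Finset.disjoint_union_right] using And.intro h12.symm h2
    · simp [FinPre.graftAux, hv]
  have gA' : FinPre.graft T' (FinPre.graftAux T'' T v hA.1 hA.2) u
      = FinPre.graftAux T' _ u hA'.1 hA'.2 := by rw [FinPre.graft, dif_pos hA']
  have gB' : FinPre.graft T'' (FinPre.graftAux T' T u hB.1 hB.2) v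
      = FinPre.graftAux T'' _ v hB'.1 hB'.2 := by rw [FinPre.graft, dif_pos hB']
  rw [gA', gB']
  have hu'' : u ∉ T''.carrier := Finset.disjoint_right.1 h2 hu
  have hv' : v ∉ T'.carrier := Finset.disjoint_right.1 h1 hv
  apply FinPre.ext'
  · show T'.carrier ∪ (T''.carrier ∪ T.carrier) = T''.carrier ∪ (T'.carrier ∪ T.carrier)
    rw [← Finset.union_assoc, ← Finset.union_assoc, Finset.union_comm T'.carrier T''.carrier]
  · funext x y
    apply propext
    show T'.le x y ∨ (T''.le x y ∨ T.le x y ∨ (T.le x v ∧ y ∈ T''.carrier)) ∨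
        ((T''.le x u ∨ T.le x u ∨ (T.le x v ∧ u ∈ T''.carrier)) ∧ y ∈ T'.carrier) ↔
      T''.le x y ∨ (T'.le x y ∨ T.le x y ∨ (T.le x u ∧ y ∈ T'.carrier)) ∨
        ((T'.le x v ∨ T.le x v ∨ (T.le x u ∧ v ∈ T'.carrier)) ∧ y ∈ T''.carrier)
    have e1 : ¬ T''.le x u := fun h => hu'' (T''.mem_of_le h).2
    have e2 : ¬ T'.le x v := fun h => hv' (T'.mem_of_le h).2
    tauto

/-- The left NAP identity `T' ▷ (T'' ▷ T) = T'' ▷ (T' ▷ T)` for the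
product `T' ▷ T'' = Σ_{v ∈ min(T'')} T' ↘_v T''` on finite connected preorders, in the
explicit form `Σ_{u,v ∈ min(T)} T' ↘_u (T'' ↘_v T) = Σ_{u,v ∈ min(T)} T'' ↘_u (T' ↘_v T)`,
as an identity in the rational vector space with basis the finite preorders. -/
theorem nap_identity_preorder {α : Type*} [DecidableEq α] (T T' T'' : FinPre α)
    (hT : T.Connected) (hT' : T'.Connected) (hT'' : T''.Connected)
    (h12 : Disjoint T'.carrier T''.carrier) (h1 : Disjoint T'.carrier T.carrier)
    (h2 : Disjoint T''.carrier T.carrier) :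
    (∑ u ∈ T.minSet, ∑ v ∈ T.minSet,
        Finsupp.single (FinPre.graft T' (FinPre.graft T'' T v) u) (1 : ℚ))
      = ∑ u ∈ T.minSet, ∑ v ∈ T.minSet,
        Finsupp.single (FinPre.graft T'' (FinPre.graft T' T v) u) (1 : ℚ) := by
  calc (∑ u ∈ T.minSet, ∑ v ∈ T.minSet,
        Finsupp.single (FinPre.graft T' (FinPre.graft T'' T v) u) (1 : ℚ))
      = ∑ u ∈ T.minSet, ∑ v ∈ T.minSet,
        Finsupp.single (FinPre.graft T'' (FinPre.graft T' T u) v) (1 : ℚ) := by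
        refine Finset.sum_congr rfl fun u hu => Finset.sum_congr rfl fun v hv => ?_
        rw [graft_swap T T' T'' h12 h1 h2 (Finset.mem_filter.1 hu).1 (Finset.mem_filter.1 hv).1]
    _ = _ := Finset.sum_comm
end
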